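/- arXiv:1501.02446 — 5 statements merged into one kernel-verified Lean document; each statement's English description precedes it below -/
import Mathlib

section
/- Let π₁, π₂ be Weil q-numbers with minimal polynomials x² − β₁x + q and x² − β₂x + q respectively (β₁, β₂ ∈ Z), and set Δ = β₁ − β₂. Then the subring R of Z[π₁] × Z[π₂] generated by the two elements (π₁, π₂) and (β₁ − π₁, β₂ − π₂) has index Δ² in Z[π₁] × Z[π₂]. -/
/-!
In the `ℤ`-basis `(1, 0), (π₁, 0), (0, 1), (0, π₂)` of `ℤ[π₁] × ℤ[π₂]` (a basis because each `πᵢ`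
has degree 2), `R` is exactly the set of `(a + bπ₁, c + dπ₂)` with `a ≡ c` and `b ≡ d` modulo `Δ`.
This set is a ring because `β₁ ≡ β₂ (mod Δ)` makes the multiplication rules of the two factors
agree modulo `Δ`. Conversely, with `F = (π₁, π₂)` and `V = (β₁ - π₁, β₂ - π₂)`, the ring `R`
contains `1`, `F`, `(Δ, 0) = F + V - β₂` and `(Δπ₁, 0) = (Δ, 0) F`, which span that set. So `R`
is the kernel of the surjection `ℤ⁴ → (ℤ/Δ)²`, `(a, b, c, d) ↦ (a - c, b - d)`, of index `Δ²`.
-/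
open Polynomial

theorem Subring.toAddSubgroup_closure_eq {R : Type*} [Ring R] {s : Set R} {A : AddSubgroup R}
    (hs : s ⊆ A) (hone : (1 : R) ∈ A) (hmul : ∀ a ∈ A, ∀ b ∈ A, a * b ∈ A)
    (hA : A ≤ (Subring.closure s).toAddSubgroup) :
    (Subring.closure s).toAddSubgroup = A := by
  refine le_antisymm (fun x hx => ?_) hA
  let A' : Subring R := { A with one_mem' := hone, mul_mem' := fun ha hb => hmul _ ha _ hb }
  exact Subring.closure_le (t := A') |>.2 hs hx

theorem AddSubgroup.relIndex_map_ker_range {G H K : Type*} [AddGroup G] [AddGroup H] [AddGroup K]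
    {f : G →+ H} (hf : Function.Injective f) {g : G →+ K} (hg : Function.Surjective g) :
    (g.ker.map f).relIndex f.range = Nat.card K := by
  rw [f.range_eq_map, relIndex_map_map_of_injective _ _ hf, relIndex_top_right, index_ker,
    g.range_eq_top.2 hg, card_top]

section LinearEval

variable {S : Type*} [CommRing S]

def linearEval (x : S) : ℤ × ℤ →+ S where
  toFun v := v.1 + v.2 * x
  map_zero' := by simp
  map_add' v w := by simp only [Prod.fst_add, Prod.snd_add]; push_cast; ring

@[simp]
theorem linearEval_apply (x : S) (v : ℤ × ℤ) : linearEval x v = v.1 + v.2 * x := rfl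

/-- Coordinates of a product in `ℤ[X]/(X² - βX + q)` with respect to the basis `1, X`. -/
def quadMul (β q : ℤ) (v w : ℤ × ℤ) : ℤ × ℤ :=
  (v.1 * w.1 - q * v.2 * w.2, v.1 * w.2 + w.1 * v.2 + β * v.2 * w.2)

theorem linearEval_mul {x : S} {β q : ℤ} (hx : x ^ 2 = β * x - q) (v w : ℤ × ℤ) :
    linearEval x v * linearEval x w = linearEval x (quadMul β q v w) := by
  simp only [linearEval_apply, quadMul]
  push_cast
  linear_combination (v.2 * w.2 : S) * hx

theorem linearEval_injective [IsDomain S] [CharZero S] {x : S}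
    (hx : 1 < (minpoly ℤ x).degree) : Function.Injective (linearEval x) := by
  refine (injective_iff_map_eq_zero _).2 fun v hv => ?_
  by_contra hne
  have hp : C v.2 * X + C v.1 ≠ 0 := fun h => hne <| Prod.ext
    (by simpa only [coeff_add, coeff_C_zero, coeff_C_mul, coeff_X_zero, mul_zero, zero_add,
      coeff_zero, Prod.fst_zero] using congrArg (coeff · 0) h)
    (by simpa only [coeff_add, coeff_C_succ, coeff_C_mul, coeff_X_one, mul_one, add_zero,
      coeff_zero, Prod.snd_zero] using congrArg (coeff · 1) h)
  have hroot : aeval x (C v.2 * X + C v.1) = 0 := by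
    rw [← hv, linearEval_apply, add_comm]
    simp only [map_add, map_mul, aeval_C, aeval_X, algebraMap_int_eq, Int.coe_castRingHom]
  have hdeg := minpoly.IsIntegrallyClosed.degree_le_of_ne_zero hp hroot
  exact (hdeg.trans degree_linear_le).not_gt hx

variable {x : S} {β q : ℤ}

theorem sq_eq_of_minpoly_eq (h : minpoly ℤ x = X ^ 2 - C β * X + C q) : x ^ 2 = β * x - q := by
  have := minpoly.aeval ℤ x
  rw [h] at this
  simp only [map_add, map_sub, map_pow, map_mul, aeval_X, aeval_C, algebraMap_int_eq,
    Int.coe_castRingHom] at this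
  linear_combination this

theorem one_lt_degree_of_minpoly_eq (h : minpoly ℤ x = X ^ 2 - C β * X + C q) :
    1 < (minpoly ℤ x).degree := by
  have : (minpoly ℤ x).degree = 2 := by rw [h]; compute_degree!
  rw [this]; norm_num

end LinearEval

section PairEval

variable {S₁ S₂ : Type*} [CommRing S₁] [CommRing S₂]

def pairEval (x₁ : S₁) (x₂ : S₂) : (ℤ × ℤ) × (ℤ × ℤ) →+ S₁ × S₂ :=
  (linearEval x₁).prodMap (linearEval x₂)

@[simp]
theorem pairEval_apply (x₁ : S₁) (x₂ : S₂) (v : (ℤ × ℤ) × (ℤ × ℤ)) :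
    pairEval x₁ x₂ v = (linearEval x₁ v.1, linearEval x₂ v.2) := rfl

theorem pairEval_injective [IsDomain S₁] [CharZero S₁] [IsDomain S₂] [CharZero S₂]
    {x₁ : S₁} {x₂ : S₂} (h₁ : 1 < (minpoly ℤ x₁).degree) (h₂ : 1 < (minpoly ℤ x₂).degree) :
    Function.Injective (pairEval x₁ x₂) :=
  (linearEval_injective h₁).prodMap (linearEval_injective h₂)

variable {x₁ : S₁} {x₂ : S₂} {β₁ β₂ q₁ q₂ : ℤ}

theorem pairEval_mul (hx₁ : x₁ ^ 2 = β₁ * x₁ - q₁) (hx₂ : x₂ ^ 2 = β₂ * x₂ - q₂)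
    (v w : (ℤ × ℤ) × (ℤ × ℤ)) :
    pairEval x₁ x₂ v * pairEval x₁ x₂ w =
      pairEval x₁ x₂ (quadMul β₁ q₁ v.1 w.1, quadMul β₂ q₂ v.2 w.2) := by
  simp only [pairEval_apply, Prod.mk_mul_mk, linearEval_mul hx₁, linearEval_mul hx₂]

theorem toAddSubgroup_closure_eq_range_pairEval (hx₁ : x₁ ^ 2 = β₁ * x₁ - q₁)
    (hx₂ : x₂ ^ 2 = β₂ * x₂ - q₂) :
    (Subring.closure {(x₁, 0), (0, x₂), (1, 0)}).toAddSubgroup = (pairEval x₁ x₂).range := by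
  refine Subring.toAddSubgroup_closure_eq ?_ ⟨((1, 0), (1, 0)), by simp⟩ ?_ ?_
  · rintro _ (rfl | rfl | rfl)
    exacts [⟨((0, 1), 0), by simp⟩, ⟨(0, (0, 1)), by simp⟩, ⟨((1, 0), 0), by simp⟩]
  · rintro _ ⟨v, rfl⟩ _ ⟨w, rfl⟩
    exact ⟨_, (pairEval_mul hx₁ hx₂ v w).symm⟩
  · rintro _ ⟨v, rfl⟩
    have hX₁ : ((x₁, 0) : S₁ × S₂) ∈ Subring.closure {(x₁, 0), (0, x₂), (1, 0)} :=
      Subring.subset_closure (by simp)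
    have hX₂ : ((0, x₂) : S₁ × S₂) ∈ Subring.closure {(x₁, 0), (0, x₂), (1, 0)} :=
      Subring.subset_closure (by simp)
    have hE : ((1, 0) : S₁ × S₂) ∈ Subring.closure {(x₁, 0), (0, x₂), (1, 0)} :=
      Subring.subset_closure (by simp)
    have hdecomp : pairEval x₁ x₂ v =
        v.1.1 • (1, 0) + v.1.2 • (x₁, 0) + v.2.1 • (1 - (1, 0)) + v.2.2 • (0, x₂) := by
      ext <;> simp
    rw [Subring.mem_toAddSubgroup, hdecomp]
    exact add_mem (add_mem (add_mem (zsmul_mem hE _) (zsmul_mem hX₁ _))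
      (zsmul_mem (sub_mem (one_mem _) hE) _)) (zsmul_mem hX₂ _)

def diffMod (n : ℕ) : (ℤ × ℤ) × (ℤ × ℤ) →+ ZMod n × ZMod n :=
  ((Int.castAddHom (ZMod n)).prodMap (Int.castAddHom (ZMod n))).comp
    (AddMonoidHom.fst _ _ - AddMonoidHom.snd _ _)

theorem mem_ker_diffMod {n : ℕ} {v : (ℤ × ℤ) × (ℤ × ℤ)} :
    v ∈ (diffMod n).ker ↔ (v.1.1 : ZMod n) = v.2.1 ∧ (v.1.2 : ZMod n) = v.2.2 := by
  simp [diffMod, Prod.ext_iff, sub_eq_zero]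

theorem diffMod_surjective (n : ℕ) : Function.Surjective (diffMod n) := by
  rintro ⟨a, b⟩
  obtain ⟨a, rfl⟩ := ZMod.intCast_surjective a
  obtain ⟨b, rfl⟩ := ZMod.intCast_surjective b
  exact ⟨((a, b), 0), by simp [diffMod, Prod.map]⟩

theorem quadMul_mem_ker_diffMod {n : ℕ} {q : ℤ} (hβ : (β₁ : ZMod n) = β₂)
    {v w : (ℤ × ℤ) × (ℤ × ℤ)} (hv : v ∈ (diffMod n).ker) (hw : w ∈ (diffMod n).ker) :
    (quadMul β₁ q v.1 w.1, quadMul β₂ q v.2 w.2) ∈ (diffMod n).ker := by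
  rw [mem_ker_diffMod] at hv hw ⊢
  simp only [quadMul]
  push_cast
  rw [hv.1, hv.2, hw.1, hw.2, hβ]
  exact ⟨rfl, rfl⟩

theorem ZMod.intCast_eq_intCast_natAbs_sub (a b : ℤ) : (a : ZMod (a - b).natAbs) = b :=
  (ZMod.intCast_eq_intCast_iff_dvd_sub _ _ _).2 (Int.natAbs_dvd.2 (dvd_sub_comm.1 dvd_rfl))

theorem toAddSubgroup_closure_eq_map_ker_diffMod {q : ℤ} (hx₁ : x₁ ^ 2 = β₁ * x₁ - q)
    (hx₂ : x₂ ^ 2 = β₂ * x₂ - q) :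
    (Subring.closure {(x₁, x₂), ((β₁ : S₁) - x₁, (β₂ : S₂) - x₂)}).toAddSubgroup =
      (diffMod (β₁ - β₂).natAbs).ker.map (pairEval x₁ x₂) := by
  have hβ := ZMod.intCast_eq_intCast_natAbs_sub β₁ β₂
  refine Subring.toAddSubgroup_closure_eq ?_
    ⟨((1, 0), (1, 0)), mem_ker_diffMod.2 (by simp), by simp⟩ ?_ ?_
  · rintro _ (rfl | rfl)
    · exact ⟨((0, 1), (0, 1)), mem_ker_diffMod.2 (by simp), by simp⟩
    · exact ⟨((β₁, -1), (β₂, -1)), mem_ker_diffMod.2 (by simp [hβ]), by ext <;> simp <;> ring⟩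
  · rintro _ ⟨v, hv, rfl⟩ _ ⟨w, hw, rfl⟩
    exact ⟨_, quadMul_mem_ker_diffMod hβ hv hw, (pairEval_mul hx₁ hx₂ v w).symm⟩
  · rintro _ ⟨v, hv, rfl⟩
    obtain ⟨h₁, h₂⟩ := mem_ker_diffMod.1 hv
    obtain ⟨s, hs⟩ := Int.natAbs_dvd.1 ((ZMod.intCast_eq_intCast_iff_dvd_sub _ _ _).1 h₁.symm)
    obtain ⟨t, ht⟩ := Int.natAbs_dvd.1 ((ZMod.intCast_eq_intCast_iff_dvd_sub _ _ _).1 h₂.symm)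
    set T := Subring.closure {((x₁, x₂) : S₁ × S₂), ((β₁ : S₁) - x₁, (β₂ : S₂) - x₂)}
    have hF : ((x₁, x₂) : S₁ × S₂) ∈ T := Subring.subset_closure (by simp)
    have hV : ((β₁ : S₁) - x₁, (β₂ : S₂) - x₂) ∈ T := Subring.subset_closure (by simp)
    -- `F + V - β₂ = (β₁ - β₂, 0)`
    have hD : (x₁, x₂) + ((β₁ : S₁) - x₁, (β₂ : S₂) - x₂) - β₂ • 1 ∈ T :=
      sub_mem (add_mem hF hV) (zsmul_mem (one_mem _) _)
    have hdecomp : pairEval x₁ x₂ v = v.2.1 • (1 : S₁ × S₂) + v.2.2 • (x₁, x₂) +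
        s • ((x₁, x₂) + ((β₁ : S₁) - x₁, (β₂ : S₂) - x₂) - β₂ • 1) +
        t • (((x₁, x₂) + ((β₁ : S₁) - x₁, (β₂ : S₂) - x₂) - β₂ • 1) * (x₁, x₂)) := by
      have hs' := congrArg (Int.cast : ℤ → S₁) hs
      have ht' := congrArg (Int.cast : ℤ → S₁) ht
      push_cast at hs' ht'
      ext
      · simp only [pairEval_apply, linearEval_apply, Prod.fst_add, Prod.fst_sub, Prod.fst_mul,
          zsmul_eq_mul, Prod.fst_intCast, mul_one]
        linear_combination hs' + x₁ * ht'
      · simp only [pairEval_apply, linearEval_apply, Prod.snd_add, Prod.snd_sub, Prod.snd_mul,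
          zsmul_eq_mul, Prod.snd_intCast, mul_one]
        ring
    rw [Subring.mem_toAddSubgroup, hdecomp]
    exact add_mem (add_mem (add_mem (zsmul_mem (one_mem _) _) (zsmul_mem hF _))
      (zsmul_mem hD _)) (zsmul_mem (mul_mem hD hF) _)

end PairEval

theorem quadratic_weil_order_index_general
    (q : ℤ)
    (β₁ β₂ : ℤ)
    (π₁ π₂ : ℂ)
    (h₁ : minpoly ℤ π₁ =
      Polynomial.X ^ 2 - Polynomial.C β₁ * Polynomial.X + Polynomial.C q)
    (h₂ : minpoly ℤ π₂ =
      Polynomial.X ^ 2 - Polynomial.C β₂ * Polynomial.X + Polynomial.C q)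
    (P R : Subring (ℂ × ℂ))
    (hP : P = Subring.closure {((π₁ : ℂ), (0 : ℂ)), ((0 : ℂ), (π₂ : ℂ)), ((1 : ℂ), (0 : ℂ))})
    (hR : R = Subring.closure
      {((π₁ : ℂ), (π₂ : ℂ)), (((β₁ : ℂ) - π₁), ((β₂ : ℂ) - π₂))}) :
    (Subring.toAddSubgroup R).relIndex (Subring.toAddSubgroup P) =
      ((β₁ - β₂).natAbs) ^ 2 := by
  have e₁ := sq_eq_of_minpoly_eq h₁
  have e₂ := sq_eq_of_minpoly_eq h₂
  have hinj := pairEval_injective (one_lt_degree_of_minpoly_eq h₁) (one_lt_degree_of_minpoly_eq h₂)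
  rw [hP, hR, toAddSubgroup_closure_eq_range_pairEval e₁ e₂,
    toAddSubgroup_closure_eq_map_ker_diffMod e₁ e₂,
    AddSubgroup.relIndex_map_ker_range hinj (diffMod_surjective _), Nat.card_prod, Nat.card_zmod,
    sq]

/-- Let `π₁, π₂` be quadratic Weil `q`-numbers with minimal
polynomials `x² − βᵢx + q`, and `Δ = β₁ − β₂`. The subring `R` of
`ℤ[π₁] × ℤ[π₂]` generated by `(π₁, π₂)` and `(β₁ − π₁, β₂ − π₂)` has index
`Δ²` (as a ℤ-lattice) in `ℤ[π₁] × ℤ[π₂]`. -/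
theorem quadratic_weil_order_index
    (p e : ℕ) (hp : p.Prime) (he : 0 < e) (q : ℤ) (hq : q = (p : ℤ) ^ e)
    (β₁ β₂ : ℤ) (hβ₁ : β₁ ^ 2 < 4 * q) (hβ₂ : β₂ ^ 2 < 4 * q)
    (π₁ π₂ : ℂ)
    (h₁ : minpoly ℤ π₁ =
      Polynomial.X ^ 2 - Polynomial.C β₁ * Polynomial.X + Polynomial.C q)
    (h₂ : minpoly ℤ π₂ =
      Polynomial.X ^ 2 - Polynomial.C β₂ * Polynomial.X + Polynomial.C q)
    (P R : Subring (ℂ × ℂ))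
    (hP : P = Subring.closure {((π₁ : ℂ), (0 : ℂ)), ((0 : ℂ), (π₂ : ℂ)), ((1 : ℂ), (0 : ℂ))})
    (hR : R = Subring.closure
      {((π₁ : ℂ), (π₂ : ℂ)), (((β₁ : ℂ) - π₁), ((β₂ : ℂ) - π₂))}) :
    (Subring.toAddSubgroup R).relIndex (Subring.toAddSubgroup P) =
      ((β₁ - β₂).natAbs) ^ 2 :=
  quadratic_weil_order_index_general q β₁ β₂ π₁ π₂ h₁ h₂ P R hP hR
end

section
/- With notation as in the previous statement (π₁, π₂ quadratic Weil q-numbers with traces β₁, β₂ and Δ = β₁ − β₂), the ring R = Z[(π₁,π₂), (β₁−π₁, β₂−π₂)] ⊆ Z[π₁] × Z[π₂] is the fibre product Z[π₁] ×_{R₀} Z[π₂], where R₀ is the common quotient Z[π₁]/ΔZ[π₁] ≅ Z[π₂]/ΔZ[π₂] (using β₁ ≡ β₂ mod Δ). -/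
open Polynomial


/-- With `π₁, π₂` quadratic Weil `q`-numbers with traces
`β₁, β₂` and `Δ = β₁ − β₂`, the ring `R = ℤ[(π₁,π₂), (β₁−π₁, β₂−π₂)]` inside
`ℤ[π₁] × ℤ[π₂]` is the fibre product `ℤ[π₁] ×_{R₀} ℤ[π₂]` over the common
quotient `R₀ = ℤ[πᵢ]/Δ`: an element `(x, y)` with `x = f(π₁)`, `y = g(π₂)`
belongs to `R` if and only if `f(π₂) ≡ g(π₂) mod Δ·ℤ[π₂]`. -/
theorem quadratic_weil_order_fibre_product
    (p e : ℕ) (hp : p.Prime) (he : 0 < e) (q : ℤ) (hq : q = (p : ℤ) ^ e)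
    (β₁ β₂ : ℤ) (hβ₁ : β₁ ^ 2 < 4 * q) (hβ₂ : β₂ ^ 2 < 4 * q)
    (π₁ π₂ : ℂ)
    (h₁ : minpoly ℤ π₁ =
      Polynomial.X ^ 2 - Polynomial.C β₁ * Polynomial.X + Polynomial.C q)
    (h₂ : minpoly ℤ π₂ =
      Polynomial.X ^ 2 - Polynomial.C β₂ * Polynomial.X + Polynomial.C q)
    (R : Subring (ℂ × ℂ))
    (hR : R = Subring.closure
      {((π₁ : ℂ), (π₂ : ℂ)), (((β₁ : ℂ) - π₁), ((β₂ : ℂ) - π₂))}) :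
    ∀ x y : ℂ, ((x, y) ∈ R ↔
      ∃ f g h : Polynomial ℤ,
        x = Polynomial.aeval π₁ f ∧ y = Polynomial.aeval π₂ g ∧
        Polynomial.aeval π₂ f - Polynomial.aeval π₂ g =
          ((β₁ - β₂ : ℤ) : ℂ) * Polynomial.aeval π₂ h) := by
  subst hR
  set s : Set (ℂ × ℂ) :=
    {((π₁ : ℂ), (π₂ : ℂ)), (((β₁ : ℂ) - π₁), ((β₂ : ℂ) - π₂))} with hs
  intro x y
  constructor
  · intro hxy
    have main : ∀ z : ℂ × ℂ, z ∈ Subring.closure s →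
        ∃ f g h : Polynomial ℤ,
          z.1 = Polynomial.aeval π₁ f ∧ z.2 = Polynomial.aeval π₂ g ∧
          Polynomial.aeval π₂ f - Polynomial.aeval π₂ g =
            ((β₁ - β₂ : ℤ) : ℂ) * Polynomial.aeval π₂ h := by
      intro z hz
      induction hz using Subring.closure_induction with
      | mem w hw =>
        simp only [hs, Set.mem_insert_iff, Set.mem_singleton_iff] at hw
        rcases hw with hw | hw <;> subst hw
        · exact ⟨X, X, 0, by simp, by simp, by simp⟩
        · refine ⟨C β₁ - X, C β₂ - X, 1, by simp, by simp, ?_⟩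
          simp only [map_sub, map_one, aeval_C, aeval_X, mul_one,
            algebraMap_int_eq, eq_intCast, map_intCast]
          push_cast
          ring
      | zero => exact ⟨0, 0, 0, by simp, by simp, by simp⟩
      | one => exact ⟨1, 1, 0, by simp, by simp, by simp⟩
      | add a b ha hb iha ihb =>
        obtain ⟨f₁, g₁, h₁, e1, e2, e3⟩ := iha
        obtain ⟨f₂, g₂, h₂, e4, e5, e6⟩ := ihb
        exact ⟨f₁ + f₂, g₁ + g₂, h₁ + h₂, by simp [e1, e4], by simp [e2, e5],
          by simp only [map_add]; linear_combination e3 + e6⟩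
      | neg a ha iha =>
        obtain ⟨f, g, h, e1, e2, e3⟩ := iha
        exact ⟨-f, -g, -h, by simp [e1], by simp [e2],
          by simp only [map_neg]; linear_combination -e3⟩
      | mul a b ha hb iha ihb =>
        obtain ⟨f₁, g₁, h₁, e1, e2, e3⟩ := iha
        obtain ⟨f₂, g₂, h₂, e4, e5, e6⟩ := ihb
        refine ⟨f₁ * f₂, g₁ * g₂, f₁ * h₂ + g₂ * h₁, by simp [e1, e4],
          by simp [e2, e5], ?_⟩
        simp only [map_add, map_mul]
        linear_combination (Polynomial.aeval π₂ f₁) * e6 +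
          (Polynomial.aeval π₂ g₂) * e3
    exact main (x, y) hxy
  · rintro ⟨f, g, h, hx, hy, hc⟩
    have mem1 : ((π₁ : ℂ), (π₂ : ℂ)) ∈ Subring.closure s :=
      Subring.subset_closure (by simp [hs])
    have mem2 : (((β₁ : ℂ) - π₁), ((β₂ : ℂ) - π₂)) ∈ Subring.closure s :=
      Subring.subset_closure (by simp [hs])
    have key : ∀ u : Polynomial ℤ,
        ((Polynomial.aeval π₁ u, Polynomial.aeval π₂ u) : ℂ × ℂ) ∈
          Subring.closure s := by
      intro u
      induction u using Polynomial.induction_on' with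
      | add a b ha hb =>
        have := add_mem ha hb
        simpa [Prod.mk_add_mk] using this
      | monomial n a =>
        have heq : ((Polynomial.aeval π₁ (monomial n a),
            Polynomial.aeval π₂ (monomial n a)) : ℂ × ℂ)
            = a • (((π₁ : ℂ), (π₂ : ℂ)) : ℂ × ℂ) ^ n := by
          simp [Polynomial.aeval_monomial, Prod.pow_mk, Prod.smul_mk,
            zsmul_eq_mul]
        rw [heq]
        exact zsmul_mem (pow_mem mem1 n) a
    have memΔ : (((β₁ - β₂ : ℤ) : ℂ), (0 : ℂ)) ∈ Subring.closure s := by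
      have : (((β₁ - β₂ : ℤ) : ℂ), (0 : ℂ)) =
          ((π₁ : ℂ), (π₂ : ℂ)) + (((β₁ : ℂ) - π₁), ((β₂ : ℂ) - π₂))
            - ((β₂ : ℤ) : ℂ × ℂ) := by
        ext <;> push_cast <;> simp <;> ring
      rw [this]
      exact sub_mem (add_mem mem1 mem2) (intCast_mem _ _)
    have final : ((x, y) : ℂ × ℂ) =
        (Polynomial.aeval π₁ f, Polynomial.aeval π₂ f)
        - ((β₁ - β₂ : ℤ) : ℂ × ℂ) *
            (Polynomial.aeval π₁ h, Polynomial.aeval π₂ h)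
        + (((β₁ - β₂ : ℤ) : ℂ), (0 : ℂ)) *
            (Polynomial.aeval π₁ h, Polynomial.aeval π₂ h) := by
      have h1 : ((β₁ - β₂ : ℤ) : ℂ × ℂ).1 = ((β₁ - β₂ : ℤ) : ℂ) := rfl
      have h2 : ((β₁ - β₂ : ℤ) : ℂ × ℂ).2 = ((β₁ - β₂ : ℤ) : ℂ) := rfl
      ext
      · simp only [Prod.fst_add, Prod.fst_sub, Prod.fst_mul, h1]
        linear_combination hx
      · simp only [Prod.snd_add, Prod.snd_sub, Prod.snd_mul, h2, zero_mul]
        linear_combination hy - hc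
    rw [final]
    exact add_mem (sub_mem (key f) (mul_mem (intCast_mem _ _) (key h)))
      (mul_mem memΔ (key h))
end

section
/- Let S be a Noetherian ring that is finite and flat as a Z-module (resp. Z_ℓ-module), and assume S is Gorenstein of Krull dimension 1. Then for a finitely generated S-module M, the following are equivalent: (1) M is reflexive (the natural map M → Hom_S(Hom_S(M,S),S) is an isomorphism); (2) M is torsionless (that map is injective); (3) M is free as a Z-module (resp. Z_ℓ-module). -/
/-!
Reflexivity of `Λ`-free modules rests on the injective coresolution `0 → S → I₀ → I₁ → 0`:
it makes `Ext¹(C, S)` vanish whenever `C` embeds in a projective module, so `S`-linear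
functionals extend along `A ↪ B` as soon as `B ⧸ A` embeds in a projective module.

Surjectivity of `M → M**`: dualizing a finite free presentation `F₁ → F₀ → M → 0` gives
`0 → M* → F₀* → F₁*`, so functionals on `M*` extend to `F₀*`, and `F₀` is reflexive.

Injectivity for `Λ`-torsion-free `M`: the kernel `T` of `M → M**` satisfies
`M ⧸ T ↪ M** ↪ (Sᵏ)*`, so functionals on `T` extend to `M`, where they vanish on `T`;
hence `T* = 0`. But a nonzero finitely generated `Λ`-torsion-free module has a nonzero
functional: after inverting `Λ ∖ {0}` the ring becomes artinian, where every nonzero finite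
module maps onto a simple module `A ⧸ 𝔪 ↪ A`, and duals of finitely presented modules
commute with localization.

Conversely, a torsionless module embeds in `M**`, which is `Λ`-torsion-free because `S` is
flat over `Λ`; over a PID, finite torsion-free modules are free.
-/

open CategoryTheory

/-- `S` has injective dimension `≤ 1` as a module over itself: there is an
exact sequence `0 → S → I₀ → I₁ → 0` with `I₀`, `I₁` injective `S`-modules.
For a Noetherian ring of Krull dimension `1` this is the Gorenstein
condition. -/
def IsGorensteinOfDimOne (S : Type) [CommRing S] : Prop :=
  ∃ (I₀ I₁ : ModuleCat S) (f : ModuleCat.of S S ⟶ I₀) (g : I₀ ⟶ I₁),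
    Injective I₀ ∧ Injective I₁ ∧
    Function.Injective f ∧ Function.Surjective g ∧
    LinearMap.range f.hom = LinearMap.ker g.hom

open Module

theorem Module.Finite.dual_of_isNoetherianRing {S : Type*} [CommRing S] [IsNoetherianRing S]
    (M : Type*) [AddCommGroup M] [Module S M] [Module.Finite S M] :
    Module.Finite S (Dual S M) := by
  obtain ⟨n, p, hp⟩ := Module.Finite.exists_fin' S M
  exact Module.Finite.of_injective p.dualMap (p.dualMap_injective_of_surjective hp)

theorem Module.isTorsionFree_of_injective_dual_eval (Λ : Type*) {S : Type*} [CommRing Λ]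
    [CommRing S] [Algebra Λ S] [IsTorsionFree Λ S] (M : Type*) [AddCommGroup M] [Module S M]
    [Module Λ M] [IsScalarTower Λ S M] (h : Function.Injective (Dual.eval S M)) :
    IsTorsionFree Λ M :=
  h.moduleIsTorsionFree _ fun c m => LinearMap.map_smul_of_tower _ c m

theorem Module.nontrivial_dual_of_isArtinianRing {A N : Type*} [CommRing A] [IsArtinianRing A]
    [AddCommGroup N] [Module A N] [Module.Finite A N] [Nontrivial N] : Nontrivial (Dual A N) := by
  obtain ⟨P, hP⟩ := IsCoatomic.exists_coatom (Submodule A N)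
  have : IsSimpleModule A (N ⧸ P) := isSimpleModule_iff_isCoatom.mpr hP
  obtain ⟨m, hm, ⟨e⟩⟩ := isSimpleModule_iff_quot_maximal.mp this
  -- In an artinian ring every maximal ideal is a minimal prime, hence an associated prime.
  have hm : m ∈ associatedPrimes A A :=
    Module.associatedPrimes.minimalPrimes_annihilator_subset_associatedPrimes A A
      (IsArtinianRing.mem_minimalPrimes (hp := hm.isPrime)
        ((Module.annihilator_eq_bot.mpr inferInstance).trans_le bot_le))
  obtain ⟨-, j, hj⟩ := (isAssociatedPrime_iff_exists_injective_linearMap m A).mp hm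
  have := IsSimpleModule.nontrivial A (N ⧸ P)
  obtain ⟨x, hx⟩ := exists_ne (0 : N ⧸ P)
  obtain ⟨x, rfl⟩ := P.mkQ_surjective x
  refine ⟨j ∘ₗ e.toLinearMap ∘ₗ P.mkQ, 0, fun h => hx ?_⟩
  have hjx : j (e (P.mkQ x)) = j (e 0) := by simpa using LinearMap.congr_fun h x
  exact e.injective (hj hjx)

theorem Module.nontrivial_dual_of_isTorsionFree (Λ : Type*) {S N : Type*} [CommRing Λ]
    [IsDomain Λ] [CommRing S] [IsNoetherianRing S] [Algebra Λ S] [Module.Finite Λ S]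
    [AddCommGroup N] [Module S N] [Module Λ N] [IsScalarTower Λ S N] [Module.Finite S N]
    [IsTorsionFree Λ N] [Nontrivial N] : Nontrivial (Dual S N) := by
  let M₀ := Algebra.algebraMapSubmonoid S (nonZeroDivisors Λ)
  let A := Localization M₀
  let K := FractionRing Λ
  have := isScalarTower_localizationAlgebra (Rₘ := K) (nonZeroDivisors Λ) (S := S) (Sₘ := A)
  have : Module.Finite K A := Module.Finite.of_isLocalization Λ S (nonZeroDivisors Λ)
  have : IsArtinianRing A := IsArtinianRing.of_finite K A
  have : Nontrivial (LocalizedModule M₀ N) := by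
    rw [← not_subsingleton_iff_nontrivial, LocalizedModule.subsingleton_iff]
    obtain ⟨x, hx⟩ := exists_ne (0 : N)
    intro h
    obtain ⟨_, ⟨c, hc, rfl⟩, hcx⟩ := h x
    rw [algebraMap_smul] at hcx
    exact hx ((isRegular_iff_mem_nonZeroDivisors.mpr hc).smul_eq_zero_iff_right.mp hcx)
  have := Module.nontrivial_dual_of_isArtinianRing (A := A) (N := LocalizedModule M₀ N)
  have := Module.finitePresentation_of_finite S N
  rw [← not_subsingleton_iff_nontrivial]
  intro h
  -- `N` is finitely presented, so its dual localizes to the dual of `LocalizedModule M₀ N`.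
  have := IsLocalizedModule.subsingleton_of_subsingleton M₀
    (IsLocalizedModule.mapExtendScalars M₀ (LocalizedModule.mkLinearMap M₀ N)
      (Algebra.linearMap S A) A)
  exact not_subsingleton (Dual A (LocalizedModule M₀ N)) this

section

variable {S : Type} [CommRing S]

theorem IsGorensteinOfDimOne.dualMap_surjective (hGor : IsGorensteinOfDimOne S)
    {A B L : Type} [AddCommGroup A] [Module S A] [AddCommGroup B] [Module S B]
    [AddCommGroup L] [Module S L] [Module.Projective S L]
    {i : A →ₗ[S] B} {e : B →ₗ[S] L} (hi : Function.Injective i) (hie : Function.Exact i e) :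
    Function.Surjective i.dualMap := by
  obtain ⟨I₀, I₁, ι, g, hI₀, hI₁, hι, hg, hιg⟩ := hGor
  have := Module.injective_module_of_injective_object S I₀
  have := Module.injective_module_of_injective_object S I₁
  intro h
  obtain ⟨F, hF⟩ := Module.Injective.out i hi (ι.hom ∘ₗ h)
  have hgF : LinearMap.ker e ≤ LinearMap.ker (g.hom ∘ₗ F) := by
    intro b hb
    obtain ⟨a, rfl⟩ := (hie b).mp hb
    have : ι.hom (h a) ∈ LinearMap.ker g.hom := hιg ▸ LinearMap.mem_range_self _ _
    simpa [hF] using this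
  obtain ⟨G, hG⟩ := Module.Injective.out ((LinearMap.ker e).liftQ e le_rfl)
    (LinearMap.ker_eq_bot.mp (Submodule.ker_liftQ_eq_bot' _ _ rfl))
    ((LinearMap.ker e).liftQ _ hgF)
  obtain ⟨G', rfl⟩ := projective_lifting_property g.hom G hg
  -- `F` corrected by `G' ∘ e` still restricts to `ι ∘ h`, and now lands in `ker g = range ι`.
  set F' := F - G' ∘ₗ e
  have hF' (b : B) : F' b ∈ LinearMap.range ι.hom := by
    simpa [hιg, F', sub_eq_zero] using (hG (Submodule.Quotient.mk b)).symm
  have hF'i (a : A) : F' (i a) = ι.hom (h a) := by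
    simp [F', hF, hie.apply_apply_eq_zero]
  refine ⟨(LinearEquiv.ofInjective ι.hom hι).symm ∘ₗ F'.codRestrict _ hF', ?_⟩
  ext a
  apply (hι : Function.Injective ι.hom)
  simpa using hF'i a

theorem IsGorensteinOfDimOne.dual_eval_surjective [IsNoetherianRing S]
    (hGor : IsGorensteinOfDimOne S) (M : Type) [AddCommGroup M] [Module S M] [Module.Finite S M] :
    Function.Surjective (Dual.eval S M) := by
  have := Module.finitePresentation_of_finite S M
  obtain ⟨n, k, p, d, hp, hdp⟩ := Module.FinitePresentation.exists_fin' S M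
  have hexact : Function.Exact p.dualMap d.dualMap :=
    LinearMap.exact_lcomp_of_exact_of_surjective S hdp hp
  intro φ
  obtain ⟨Φ, rfl⟩ := hGor.dualMap_surjective (p.dualMap_injective_of_surjective hp) hexact φ
  obtain ⟨x, rfl⟩ := (Module.bijective_dual_eval S (Fin n → S)).surjective Φ
  exact ⟨p x, rfl⟩

theorem IsGorensteinOfDimOne.dual_eval_injective (Λ : Type*) [CommRing Λ] [IsDomain Λ]
    [IsNoetherianRing S] [Algebra Λ S] [Module.Finite Λ S] (hGor : IsGorensteinOfDimOne S)
    (M : Type) [AddCommGroup M] [Module S M] [Module Λ M] [IsScalarTower Λ S M]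
    [Module.Finite S M] [IsTorsionFree Λ M] :
    Function.Injective (Dual.eval S M) := by
  let T := LinearMap.ker (Dual.eval S M)
  have := Module.Finite.dual_of_isNoetherianRing (S := S) M
  obtain ⟨k, q, hq⟩ := Module.Finite.exists_fin' S (Dual S M)
  have hexact : Function.Exact T.subtype (q.dualMap ∘ₗ Dual.eval S M) := by
    rw [LinearMap.exact_iff, Submodule.range_subtype, LinearMap.ker_comp_of_ker_eq_bot _
      (LinearMap.ker_eq_bot.mpr (q.dualMap_injective_of_surjective hq))]
  have hzero : T.subtype.dualMap = 0 := by
    ext f t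
    exact LinearMap.congr_fun t.2 f
  have : Subsingleton (Dual S T) := by
    refine subsingleton_of_forall_eq 0 fun f => ?_
    obtain ⟨g, rfl⟩ := hGor.dualMap_surjective T.injective_subtype hexact f
    rw [hzero, LinearMap.zero_apply]
  rw [← LinearMap.ker_eq_bot, ← Submodule.subsingleton_iff_eq_bot]
  by_contra hT
  rw [not_subsingleton_iff_nontrivial] at hT
  exact not_nontrivial (Dual S T) (Module.nontrivial_dual_of_isTorsionFree Λ)

end

theorem reflexive_tfae_general
    (Λ : Type) [CommRing Λ] [IsDomain Λ] [IsPrincipalIdealRing Λ]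
    (S : Type) [CommRing S] [IsNoetherianRing S] [Algebra Λ S]
    [Module.Finite Λ S] [Module.Flat Λ S]
    (hGor : IsGorensteinOfDimOne S)
    (M : Type) [AddCommGroup M] [Module S M] [Module Λ M]
    [IsScalarTower Λ S M] [Module.Finite S M] :
    List.TFAE
      [Function.Bijective (Module.Dual.eval S M),
       Function.Injective (Module.Dual.eval S M),
       Module.Free Λ M] := by
  tfae_have 1 → 2 := Function.Bijective.injective
  tfae_have 2 → 3 := fun h => by
    have := Module.isTorsionFree_of_injective_dual_eval Λ M h
    have := Module.Finite.trans (R := Λ) S M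
    exact Module.free_of_finite_type_torsion_free'
  tfae_have 3 → 1 := fun _ =>
    ⟨hGor.dual_eval_injective Λ M, hGor.dual_eval_surjective M⟩
  tfae_finish

/-- Let `Λ` be `ℤ` or `ℤ_ℓ` (formalized: a principal ideal
domain) and `S` a Noetherian `Λ`-algebra, finite and flat over `Λ`, which is
Gorenstein of Krull dimension `1`. For a finitely generated `S`-module `M`
the following are equivalent: `M` is reflexive; `M` is torsionless; `M` is
free as a `Λ`-module. -/
theorem reflexive_tfae
    (Λ : Type) [CommRing Λ] [IsDomain Λ] [IsPrincipalIdealRing Λ]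
    (S : Type) [CommRing S] [IsNoetherianRing S] [Algebra Λ S]
    [Module.Finite Λ S] [Module.Flat Λ S]
    (hdim : ringKrullDim S = 1) (hGor : IsGorensteinOfDimOne S)
    (M : Type) [AddCommGroup M] [Module S M] [Module Λ M]
    [IsScalarTower Λ S M] [Module.Finite S M] :
    List.TFAE
      [Function.Bijective (Module.Dual.eval S M),
       Function.Injective (Module.Dual.eval S M),
       Module.Free Λ M] :=
  reflexive_tfae_general Λ S hGor M
end

section
/- Let S be a 1-dimensional Gorenstein Noetherian ring. Then for every finitely generated reflexive S-module M, one has Ext¹_S(M, S) = 0. -/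
/-!
A reflexive module `M` embeds into a finite free module `F`: `M → M**` is injective, and a
surjection `Sⁿ → M*` (which exists as `S` is Noetherian) dualizes to an injection
`M** → (Sⁿ)*`. Since `F` is projective, the sequence `0 → M → F → F/M → 0` embeds
`Ext¹(M, S)` into `Ext²(F/M, S)`, which vanishes because `S` has injective dimension `≤ 1`.
-/

open CategoryTheory

universe w

open Abelian

theorem Module.exists_injective_pi_fin_of_injective_dual_eval {R M : Type*} [CommRing R]
    [AddCommGroup M] [Module R M] [Module.Finite R (Module.Dual R M)]
    (h : Function.Injective (Module.Dual.eval R M)) :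
    ∃ (n : ℕ) (f : M →ₗ[R] Fin n → R), Function.Injective f := by
  obtain ⟨n, π, hπ⟩ := Module.Finite.exists_fin' R (Module.Dual R M)
  exact ⟨n, (Module.piEquiv (Fin n) R R).symm.toLinearMap ∘ₗ π.dualMap ∘ₗ Module.Dual.eval R M,
    (Module.piEquiv (Fin n) R R).symm.injective.comp
      ((LinearMap.dualMap_injective_of_surjective hπ).comp h)⟩

theorem CategoryTheory.Abelian.Ext.subsingleton_of_shortExact_of_projective
    {C : Type*} [Category C] [Abelian C] [HasExt.{w} C] {T : ShortComplex C}
    (hT : T.ShortExact) [Projective T.X₂] (Y : C) (n : ℕ)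
    [HasInjectiveDimensionLT Y (n + 2)] :
    Subsingleton (Ext.{w} T.X₁ Y (n + 1)) := by
  refine subsingleton_of_forall_eq 0 fun x => ?_
  obtain ⟨x₂, rfl⟩ := Ext.contravariant_sequence_exact₁ hT Y x (add_comm 1 (n + 1))
    (Ext.eq_zero_of_hasInjectiveDimensionLT _ (n + 2) le_rfl)
  rw [x₂.eq_zero_of_projective, Ext.comp_zero]

theorem IsGorensteinOfDimOne.hasInjectiveDimensionLT_two {S : Type} [CommRing S]
    (hS : IsGorensteinOfDimOne S) : HasInjectiveDimensionLT (ModuleCat.of S S) 2 := by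
  obtain ⟨I₀, I₁, f, g, hI₀, hI₁, hf, hg, hfg⟩ := hS
  have hT := ModuleCat.shortComplex_shortExact
    (ModuleCat.shortComplexOfCompEqZero f.hom g.hom (LinearMap.range_le_ker_iff.1 hfg.le))
    (LinearMap.exact_iff.2 hfg.symm) hf hg
  exact hT.hasInjectiveDimensionLT_X₁ 1 inferInstance inferInstance

theorem ext_one_vanishes_of_reflexive_general
    (S : Type) [CommRing S] [IsNoetherianRing S]
    [HasExt.{0} (ModuleCat S)]
    (hGor : IsGorensteinOfDimOne S)
    (M : Type) [AddCommGroup M] [Module S M] [Module.Finite S M]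
    (hrefl : Function.Bijective (Module.Dual.eval S M)) :
    Subsingleton (Abelian.Ext.{0} (ModuleCat.of S M) (ModuleCat.of S S) 1) := by
  obtain ⟨n, ι, hι⟩ := Module.exists_injective_pi_fin_of_injective_dual_eval hrefl.injective
  have : Mono (ModuleCat.ofHom ι) := (ModuleCat.mono_iff_injective _).2 hι
  have := hGor.hasInjectiveDimensionLT_two
  exact Ext.subsingleton_of_shortExact_of_projective
    (T := ShortComplex.mk _ _ (Limits.cokernel.condition (ModuleCat.ofHom ι)))
    { exact := ShortComplex.exact_cokernel _ } (ModuleCat.of S S) 0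

/-- Over a `1`-dimensional Gorenstein Noetherian ring `S`,
every finitely generated reflexive `S`-module `M` satisfies
`Ext¹_S(M, S) = 0`. -/
theorem ext_one_vanishes_of_reflexive
    (S : Type) [CommRing S] [IsNoetherianRing S]
    [HasExt.{0} (ModuleCat S)]
    (hdim : ringKrullDim S = 1) (hGor : IsGorensteinOfDimOne S)
    (M : Type) [AddCommGroup M] [Module S M] [Module.Finite S M]
    (hrefl : Function.Bijective (Module.Dual.eval S M)) :
    Subsingleton (Abelian.Ext.{0} (ModuleCat.of S M) (ModuleCat.of S S) 1) :=
  ext_one_vanishes_of_reflexive_general S hGor M hrefl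
end

section
/- Let p be a prime and consider the ring R = F_p[F,V]/(FV, F·h(F), V·h(V)) for a polynomial h ∈ F_p[X] of degree D with h(0) ≠ 0. Then the socle of R at the maximal ideal (F,V), i.e., the annihilator of the ideal (F,V) in R, is 1-dimensional over F_p. If instead h(0) = 0, the socle is 2-dimensional over F_p. -/
/-!
Write `A = K[X]/(X·h)`. Sending `F ↦ (X, 0)` and `V ↦ (0, X)` maps `R` into `A × A`, and this
map is injective: modulo `FV` every element of `R` is `P₁(F) + P₂(V)`, and such an element maps
to `(P₁ + P₂(0), P₁(0) + P₂)`. In `A` the annihilator of `X` is the line spanned by `h`, so the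
socle of `R` consists of the elements mapping to `(s·h, t·h)`. Both components of an image
take the same value at `X = 0`, which forces `s·h(0) = t·h(0)`; conversely, each such pair is
attained. This leaves a line of pairs `(s, t)` when `h(0) ≠ 0` and the whole plane when `h(0) = 0`.
-/

open Polynomial

namespace FVRing

variable {K : Type*} [Field K] (h : K[X])

theorem root_mul_mk_self : AdjoinRoot.root (X * h) * AdjoinRoot.mk (X * h) h = 0 := by
  rw [← AdjoinRoot.mk_X, ← map_mul, AdjoinRoot.mk_self]

variable {h} in
theorem mk_self_ne_zero (hh : h ≠ 0) : AdjoinRoot.mk (X * h) h ≠ 0 := by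
  rw [Ne, AdjoinRoot.mk_eq_zero]
  intro hdvd
  have := natDegree_le_of_dvd hdvd hh
  rw [natDegree_mul X_ne_zero hh, natDegree_X] at this
  omega

variable {h} in
theorem mem_span_mk_self_of_root_mul_eq_zero {u : AdjoinRoot (X * h)}
    (hu : AdjoinRoot.root (X * h) * u = 0) : u ∈ K ∙ AdjoinRoot.mk (X * h) h := by
  obtain ⟨g, rfl⟩ := AdjoinRoot.mk_surjective u
  rw [← AdjoinRoot.mk_X, ← map_mul, AdjoinRoot.mk_eq_zero,
    mul_dvd_mul_iff_left X_ne_zero] at hu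
  obtain ⟨q, rfl⟩ := hu
  obtain ⟨v, hv⟩ : X ∣ q - C (q.eval 0) := by simp [X_dvd_iff, coeff_zero_eq_eval_zero]
  refine Submodule.mem_span_singleton.2 ⟨q.eval 0, ?_⟩
  rw [Algebra.smul_def, AdjoinRoot.algebraMap_eq, ← AdjoinRoot.mk_C, ← map_mul,
    AdjoinRoot.mk_eq_mk]
  exact ⟨-v, by linear_combination -h * hv⟩

noncomputable def evalZero : AdjoinRoot (X * h) →ₐ[K] K :=
  AdjoinRoot.liftAlgHom (X * h) (Algebra.ofId K K) 0 (by simp)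

@[simp]
theorem evalZero_mk (g : K[X]) : evalZero h (AdjoinRoot.mk (X * h) g) = g.eval 0 := by
  simp [evalZero, AdjoinRoot.liftAlgHom_mk, coeff_zero_eq_eval_zero]

@[simp]
theorem evalZero_root : evalZero h (AdjoinRoot.root (X * h)) = 0 := by
  simp [evalZero]

theorem exists_eq_aeval_X_add_aeval_X_add_X_mul_X_mul (Q : MvPolynomial Bool K) :
    ∃ (P₁ P₂ : K[X]) (C' : MvPolynomial Bool K),
      Q = aeval (MvPolynomial.X true) P₁ + aeval (MvPolynomial.X false) P₂ +
        MvPolynomial.X true * MvPolynomial.X false * C' := by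
  have aeval_eq_divX (b : Bool) (P : K[X]) : aeval (MvPolynomial.X (R := K) b) P =
      aeval (MvPolynomial.X b) P.divX * MvPolynomial.X b + MvPolynomial.C (P.coeff 0) := by
    conv_lhs => rw [← divX_mul_X_add P]
    simp [MvPolynomial.algebraMap_eq]
  induction Q using MvPolynomial.induction_on with
  | C a => exact ⟨C a, 0, 0, by simp [MvPolynomial.algebraMap_eq]⟩
  | add Q₁ Q₂ ih₁ ih₂ =>
    obtain ⟨P₁, P₂, C₁, rfl⟩ := ih₁
    obtain ⟨P₁', P₂', C₂, rfl⟩ := ih₂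
    exact ⟨P₁ + P₁', P₂ + P₂', C₁ + C₂, by simp only [map_add]; ring⟩
  | mul_X Q b ih =>
    obtain ⟨P₁, P₂, C', rfl⟩ := ih
    cases b with
    | true =>
      refine ⟨(P₁ + C (P₂.coeff 0)) * X, 0,
        C' * MvPolynomial.X true + aeval (MvPolynomial.X false) P₂.divX, ?_⟩
      rw [aeval_eq_divX false P₂]
      simp only [map_add, map_mul, aeval_X, aeval_C, MvPolynomial.algebraMap_eq, map_zero]
      ring
    | false =>
      refine ⟨0, (P₂ + C (P₁.coeff 0)) * X,
        aeval (MvPolynomial.X true) P₁.divX + C' * MvPolynomial.X false, ?_⟩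
      rw [aeval_eq_divX true P₁]
      simp only [map_add, map_mul, aeval_X, aeval_C, MvPolynomial.algebraMap_eq, map_zero]
      ring

noncomputable def relIdeal : Ideal (MvPolynomial Bool K) :=
  Ideal.span {MvPolynomial.X true * MvPolynomial.X false,
    MvPolynomial.X true * aeval (MvPolynomial.X true) h,
    MvPolynomial.X false * aeval (MvPolynomial.X false) h}

variable {h} in
theorem aeval_X_mem_relIdeal (b : Bool) {g : K[X]} (hg : X * h ∣ g) :
    aeval (MvPolynomial.X b) g ∈ relIdeal h := by
  obtain ⟨q, rfl⟩ := hg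
  rw [map_mul, map_mul, aeval_X]
  refine Ideal.mul_mem_right _ _ (Ideal.subset_span ?_)
  cases b <;> simp

noncomputable def toProd : MvPolynomial Bool K →ₐ[K] AdjoinRoot (X * h) × AdjoinRoot (X * h) :=
  MvPolynomial.aeval fun b => if b then (AdjoinRoot.root _, 0) else (0, AdjoinRoot.root _)

@[simp]
theorem toProd_X_true : toProd h (MvPolynomial.X true) = (AdjoinRoot.root _, 0) := by
  simp [toProd]

@[simp]
theorem toProd_X_false : toProd h (MvPolynomial.X false) = (0, AdjoinRoot.root _) := by
  simp [toProd]

@[simp]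
theorem toProd_aeval_X_true (g : K[X]) :
    toProd h (aeval (MvPolynomial.X true) g) =
      (AdjoinRoot.mk _ g, algebraMap K _ (g.eval 0)) := by
  rw [← aeval_algHom_apply, toProd_X_true, aeval_prod_apply, AdjoinRoot.aeval_eq,
    ← coeff_zero_eq_aeval_zero', coeff_zero_eq_eval_zero]

@[simp]
theorem toProd_aeval_X_false (g : K[X]) :
    toProd h (aeval (MvPolynomial.X false) g) =
      (algebraMap K _ (g.eval 0), AdjoinRoot.mk _ g) := by
  rw [← aeval_algHom_apply, toProd_X_false, aeval_prod_apply, AdjoinRoot.aeval_eq,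
    ← coeff_zero_eq_aeval_zero', coeff_zero_eq_eval_zero]

theorem relIdeal_le_ker_toProd : relIdeal h ≤ RingHom.ker (toProd h) := by
  rw [relIdeal, Ideal.span_le]
  rintro x (rfl | rfl | rfl) <;> simp [root_mul_mk_self]

@[simp]
theorem toProd_X_mul_X : toProd h (MvPolynomial.X true * MvPolynomial.X false) = 0 := by
  simp

theorem ker_toProd : RingHom.ker (toProd h) = relIdeal h := by
  refine le_antisymm (fun Q hQ => ?_) (relIdeal_le_ker_toProd h)
  obtain ⟨P₁, P₂, C', rfl⟩ := exists_eq_aeval_X_add_aeval_X_add_X_mul_X_mul Q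
  rw [RingHom.mem_ker, map_add, map_add, map_mul, toProd_X_mul_X, zero_mul, add_zero,
    toProd_aeval_X_true, toProd_aeval_X_false, Prod.mk_add_mk, Prod.mk_eq_zero,
    AdjoinRoot.algebraMap_eq, ← AdjoinRoot.mk_C, ← AdjoinRoot.mk_C, ← map_add, ← map_add,
    AdjoinRoot.mk_eq_zero, AdjoinRoot.mk_eq_zero, add_comm (C _)] at hQ
  obtain ⟨h₁, h₂⟩ := hQ
  have h₀ : P₁.eval 0 + P₂.eval 0 = 0 := by
    obtain ⟨q, hq⟩ := h₁
    simpa using congrArg (eval 0) hq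
  have hQ : aeval (MvPolynomial.X (R := K) true) P₁ + aeval (MvPolynomial.X false) P₂ =
      aeval (MvPolynomial.X true) (P₁ + C (P₂.eval 0)) +
        aeval (MvPolynomial.X false) (P₂ + C (P₁.eval 0)) := by
    have hC : MvPolynomial.C (σ := Bool) (P₁.eval 0) + MvPolynomial.C (P₂.eval 0) = 0 := by
      rw [← map_add, h₀, map_zero]
    simp only [map_add, aeval_C, MvPolynomial.algebraMap_eq]
    linear_combination -hC
  rw [hQ]
  refine add_mem (add_mem (aeval_X_mem_relIdeal true h₁) (aeval_X_mem_relIdeal false h₂)) ?_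
  exact Ideal.mul_mem_right _ _ (Ideal.subset_span (by simp))

noncomputable def quotientToProd :
    MvPolynomial Bool K ⧸ relIdeal h →ₐ[K] AdjoinRoot (X * h) × AdjoinRoot (X * h) :=
  Ideal.Quotient.liftₐ _ (toProd h) fun _ ha => relIdeal_le_ker_toProd h ha

@[simp]
theorem quotientToProd_mk (Q : MvPolynomial Bool K) :
    quotientToProd h (Ideal.Quotient.mk _ Q) = toProd h Q :=
  rfl

theorem quotientToProd_injective : Function.Injective (quotientToProd h) :=
  RingHom.lift_injective_of_ker_le_ideal _ _ (ker_toProd h).le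

variable {h} in
theorem evalZero_fst_quotientToProd_eq_snd (x : MvPolynomial Bool K ⧸ relIdeal h) :
    evalZero h (quotientToProd h x).1 = evalZero h (quotientToProd h x).2 := by
  obtain ⟨Q, rfl⟩ := Ideal.Quotient.mk_surjective x
  have : (evalZero h).comp ((AlgHom.fst K _ _).comp (toProd h)) =
      (evalZero h).comp ((AlgHom.snd K _ _).comp (toProd h)) :=
    MvPolynomial.algHom_ext fun b => by cases b <;> simp
  exact DFunLike.congr_fun this Q

noncomputable def socle : Submodule K (MvPolynomial Bool K ⧸ relIdeal h) :=
  LinearMap.ker (LinearMap.mulLeft K (Ideal.Quotient.mk _ (MvPolynomial.X true))) ⊓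
    LinearMap.ker (LinearMap.mulLeft K (Ideal.Quotient.mk _ (MvPolynomial.X false)))

variable {h} in
theorem mem_socle_iff {x : MvPolynomial Bool K ⧸ relIdeal h} :
    x ∈ socle h ↔ AdjoinRoot.root _ * (quotientToProd h x).1 = 0 ∧
      AdjoinRoot.root _ * (quotientToProd h x).2 = 0 := by
  simp [socle, ← (quotientToProd_injective h).eq_iff, Prod.ext_iff]

variable {h} in
theorem exists_smul_of_mem_socle {x : MvPolynomial Bool K ⧸ relIdeal h} (hx : x ∈ socle h) :
    ∃ s t : K, s * h.eval 0 = t * h.eval 0 ∧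
      quotientToProd h x = (s • AdjoinRoot.mk _ h, t • AdjoinRoot.mk _ h) := by
  rw [mem_socle_iff] at hx
  obtain ⟨s, hs⟩ := Submodule.mem_span_singleton.1 (mem_span_mk_self_of_root_mul_eq_zero hx.1)
  obtain ⟨t, ht⟩ := Submodule.mem_span_singleton.1 (mem_span_mk_self_of_root_mul_eq_zero hx.2)
  refine ⟨s, t, ?_, Prod.ext hs.symm ht.symm⟩
  simpa [← hs, ← ht] using evalZero_fst_quotientToProd_eq_snd x

variable {h}

theorem finrank_socle_of_eval_ne_zero (hh : h ≠ 0) (h₀ : h.eval 0 ≠ 0) :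
    Module.finrank K (socle h) = 1 := by
  set w : MvPolynomial Bool K ⧸ relIdeal h := Ideal.Quotient.mk _
    (aeval (MvPolynomial.X true) h + aeval (MvPolynomial.X false) h - MvPolynomial.C (h.eval 0))
  have hw : quotientToProd h w = (AdjoinRoot.mk _ h, AdjoinRoot.mk _ h) := by
    simp [w, ← MvPolynomial.algebraMap_eq]
  have hsocle : socle h = K ∙ w := by
    refine le_antisymm (fun x hx => ?_) ((Submodule.span_singleton_le_iff_mem _ _).2 ?_)
    · obtain ⟨s, t, hst, hx⟩ := exists_smul_of_mem_socle hx
      obtain rfl := mul_right_cancel₀ h₀ hst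
      refine Submodule.mem_span_singleton.2 ⟨s, quotientToProd_injective h ?_⟩
      rw [map_smul, hw, hx, Prod.smul_mk]
    · rw [mem_socle_iff, hw]
      exact ⟨root_mul_mk_self h, root_mul_mk_self h⟩
  rw [hsocle, finrank_span_singleton]
  intro hw0
  rw [hw0, map_zero] at hw
  exact mk_self_ne_zero hh (congrArg Prod.fst hw).symm

theorem finrank_socle_of_eval_eq_zero (hh : h ≠ 0) (h₀ : h.eval 0 = 0) :
    Module.finrank K (socle h) = 2 := by
  set w₁ : MvPolynomial Bool K ⧸ relIdeal h :=
    Ideal.Quotient.mk _ (aeval (MvPolynomial.X true) h)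
  set w₂ : MvPolynomial Bool K ⧸ relIdeal h :=
    Ideal.Quotient.mk _ (aeval (MvPolynomial.X false) h)
  have hw₁ : quotientToProd h w₁ = (AdjoinRoot.mk _ h, 0) := by simp [w₁, h₀]
  have hw₂ : quotientToProd h w₂ = (0, AdjoinRoot.mk _ h) := by simp [w₂, h₀]
  have hsocle : socle h = Submodule.span K {w₁, w₂} := by
    refine le_antisymm (fun x hx => ?_) (Submodule.span_le.2 ?_)
    · obtain ⟨s, t, -, hx⟩ := exists_smul_of_mem_socle hx
      refine Submodule.mem_span_pair.2 ⟨s, t, quotientToProd_injective h ?_⟩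
      simp [hw₁, hw₂, hx]
    · rintro _ (rfl | rfl) <;> simp [mem_socle_iff, hw₁, hw₂, root_mul_mk_self]
  have hli : LinearIndependent K ![w₁, w₂] := by
    refine LinearIndependent.pair_iff.2 fun s t hst => ?_
    simpa only [map_add, map_smul, map_zero, hw₁, hw₂, Prod.smul_mk, smul_zero, Prod.mk_add_mk,
      add_zero, zero_add, Prod.mk_eq_zero, smul_eq_zero, mk_self_ne_zero hh, or_false]
      using congrArg (quotientToProd h) hst
  rw [hsocle, ← Matrix.range_cons_cons_empty, finrank_span_eq_card hli, Fintype.card_fin]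

end FVRing

theorem socle_dimension_general
    (p : ℕ) [Fact p.Prime]
    (h : Polynomial (ZMod p)) (hh : h ≠ 0)
    (F V : MvPolynomial Bool (ZMod p))
    (hF : F = MvPolynomial.X true) (hV : V = MvPolynomial.X false)
    (I : Ideal (MvPolynomial Bool (ZMod p)))
    (hI : I = Ideal.span
      {F * V, F * Polynomial.aeval F h, V * Polynomial.aeval V h}) :
    (Polynomial.eval 0 h ≠ 0 →
      Module.finrank (ZMod p)
        ↥(LinearMap.ker
            (LinearMap.mulLeft (ZMod p) (Ideal.Quotient.mk I F)) ⊓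
          LinearMap.ker
            (LinearMap.mulLeft (ZMod p) (Ideal.Quotient.mk I V))) = 1) ∧
    (Polynomial.eval 0 h = 0 →
      Module.finrank (ZMod p)
        ↥(LinearMap.ker
            (LinearMap.mulLeft (ZMod p) (Ideal.Quotient.mk I F)) ⊓
          LinearMap.ker
            (LinearMap.mulLeft (ZMod p) (Ideal.Quotient.mk I V))) = 2) := by
  subst hF hV hI
  exact ⟨FVRing.finrank_socle_of_eval_ne_zero hh, FVRing.finrank_socle_of_eval_eq_zero hh⟩

/-- Let `R = 𝔽_p[F,V]/(FV, F·h(F), V·h(V))` with `h` a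
nonzero polynomial of degree `D` over `𝔽_p`. The socle of `R` at the maximal
ideal `(F,V)`, i.e. `ker(F·) ∩ ker(V·)`, is `1`-dimensional over `𝔽_p` when
`h(0) ≠ 0`, and `2`-dimensional when `h(0) = 0`. -/
theorem socle_dimension
    (p : ℕ) [Fact p.Prime]
    (D : ℕ) (h : Polynomial (ZMod p)) (hh : h ≠ 0) (hdeg : h.natDegree = D)
    (F V : MvPolynomial Bool (ZMod p))
    (hF : F = MvPolynomial.X true) (hV : V = MvPolynomial.X false)
    (I : Ideal (MvPolynomial Bool (ZMod p)))
    (hI : I = Ideal.span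
      {F * V, F * Polynomial.aeval F h, V * Polynomial.aeval V h}) :
    (Polynomial.eval 0 h ≠ 0 →
      Module.finrank (ZMod p)
        ↥(LinearMap.ker
            (LinearMap.mulLeft (ZMod p) (Ideal.Quotient.mk I F)) ⊓
          LinearMap.ker
            (LinearMap.mulLeft (ZMod p) (Ideal.Quotient.mk I V))) = 1) ∧
    (Polynomial.eval 0 h = 0 →
      Module.finrank (ZMod p)
        ↥(LinearMap.ker
            (LinearMap.mulLeft (ZMod p) (Ideal.Quotient.mk I F)) ⊓
          LinearMap.ker
            (LinearMap.mulLeft (ZMod p) (Ideal.Quotient.mk I V))) = 2) :=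
  socle_dimension_general p h hh F V hF hV I hI
end
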